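/- Let K be a field. Let V with operators (P,Q) and W with operators (S,T) be as follows: V has basis v₁,v₂,a₁,a₂ with P(v₁)=a₁, P(v₂)=a₂, P(a₁)=P(a₂)=0, Q=0; W has basis w₁,w₂,b₁,b₂ with S(w₁)=b₁, T(w₁)=b₂, and S, T zero on the other basis vectors. Then for every invertible 2×2 matrix (α_{ij}) over K, the module structures (α₁₁P+α₁₂Q, α₂₁P+α₂₂Q) on V and (S,T) on W are not isomorphic; i.e., V and W are not weakly isomorphic as K[x,y]-modules. -/

import Mathlib

/-!
Twisting the pair `(P, 0)` by any matrix gives two operators that are both multiples of `P`,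
so they send every vector to a linearly dependent pair. In `W`, however, `S` and `T` send `c 0`
to the independent pair `c 2, c 3`, and a linear isomorphism intertwining the operators would
transport the first property to `W`.
-/

theorem not_linearIndependent_smul_pair {K M : Type*} [Field K] [AddCommGroup M] [Module K M]
    (a b : K) (u : M) : ¬ LinearIndependent K ![a • u, b • u] := by
  intro hli
  obtain ⟨rfl, ha⟩ := LinearIndependent.pair_iff.mp hli b (-a) (by
    rw [smul_smul, smul_smul, mul_comm, neg_mul, neg_smul, add_neg_cancel])
  rw [neg_eq_zero] at ha
  subst ha
  exact hli.ne_zero 0 (by simp)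

theorem not_linearIndependent_of_intertwines_smul {K V W : Type*} [Field K]
    [AddCommGroup V] [Module K V] [AddCommGroup W] [Module K W]
    (φ : V ≃ₗ[K] W) (P : V →ₗ[K] V) (S T : W →ₗ[K] W) (a b : K)
    (hS : ∀ v, φ (a • P v) = S (φ v)) (hT : ∀ v, φ (b • P v) = T (φ v)) (w : W) :
    ¬ LinearIndependent K ![S w, T w] := by
  have hSw : S w = a • φ (P (φ.symm w)) := by rw [← map_smul, hS, φ.apply_symm_apply]
  have hTw : T w = b • φ (P (φ.symm w)) := by rw [← map_smul, hT, φ.apply_symm_apply]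
  rw [hSw, hTw]
  exact not_linearIndependent_smul_pair a b _

theorem stmt_10 {K V W : Type*} [Field K] [AddCommGroup V] [Module K V]
    [AddCommGroup W] [Module K W]
    (c : Module.Basis (Fin 4) K W)
    (P Q : V →ₗ[K] V) (S T : W →ₗ[K] W)
    (hQ : Q = 0)
    (hS0 : S (c 0) = c 2)
    (hT0 : T (c 0) = c 3) :
    ∀ M : Matrix (Fin 2) (Fin 2) K, IsUnit M →
      ¬ ∃ φ : V ≃ₗ[K] W,
        (∀ v, φ ((M 0 0 • P + M 0 1 • Q) v) = S (φ v)) ∧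
        (∀ v, φ ((M 1 0 • P + M 1 1 • Q) v) = T (φ v)) := by
  rintro M - ⟨φ, hS, hT⟩
  subst hQ
  simp only [smul_zero, add_zero, LinearMap.smul_apply] at hS hT
  have hli : LinearIndependent K ![S (c 0), T (c 0)] := by
    rw [hS0, hT0]
    convert c.linearIndependent.comp ![2, 3] (by decide) using 1
    ext i; fin_cases i <;> rfl
  exact not_linearIndependent_of_intertwines_smul φ P S T _ _ hS hT (c 0) hli
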